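/- arXiv:1511.01579 — 7 statements merged into one kernel-verified Lean document; each statement's English description precedes it below -/
import Mathlib

section
/- Let K be a real Banach algebra and let ι : K → C(Ω) be a continuous injective algebra homomorphism into the sup-normed algebra of continuous real functions on Ω. Suppose T : K → L(K,K) is a map such that for every f ∈ K, T(f) is a bounded linear operator on K satisfying ι(T(f)(φ)) = L_{ι(f)}(ι(φ)) for all φ ∈ K (i.e. T(f) realizes on K the Ruelle operator of the potential ι(f)). Then T is an analytic (Fréchet-analytic) map from K into the Banach space L(K,K) of bounded linear operators on K. -/
/-!
On `Ω` the weight `e^{ι f}` is the image `ι (exp f)` of the Banach-algebra exponential, because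
`ι` followed by evaluation at a point is a continuous character of `K`. Hence the Ruelle operator
of `ι f` is that of the zero potential applied to `ι (exp f * φ)`, and injectivity of `ι` gives
`T f = T 0 ∘ (exp f * ·)`: a bounded linear map composed with the entire map `exp`.
-/

open MeasureTheory Filter

noncomputable section

namespace Paper

variable {M : Type*} [MetricSpace M]

/-- Prepend one symbol: `ax = (a, x₁, x₂, …)`. -/
def cons (a : M) (x : ℕ → M) : ℕ → M
  | 0 => a
  | n + 1 => x n

/-- Prepend a finite word `a ∈ Mⁿ`. -/
def consW {n : ℕ} (a : Fin n → M) (x : ℕ → M) : ℕ → M :=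
  fun k => if h : k < n then a ⟨k, h⟩ else x (k - n)

/-- The left shift `σ`. -/
def shift (x : ℕ → M) : ℕ → M := fun n => x (n + 1)

/-- Birkhoff sum `Sₙ f = f + f∘σ + … + f∘σ^{n-1}`. -/
def birk (f : (ℕ → M) → ℝ) (n : ℕ) (x : ℕ → M) : ℝ :=
  ∑ i ∈ Finset.range n, f (shift^[i] x)

/-- The metric `d_Ω(x,y) = Σ_{n≥1} 2^{-n} d(xₙ,yₙ)`. -/
def dOmega (x y : ℕ → M) : ℝ :=
  ∑' n : ℕ, (1 / 2 : ℝ) ^ (n + 1) * dist (x n) (y n)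

/-- `dₙ(x,y) = max_{0 ≤ k < n} d_Ω(σᵏx, σᵏy)`. -/
def dN (n : ℕ) (x y : ℕ → M) : ℝ :=
  ⨆ k : Fin n, dOmega (shift^[(k : ℕ)] x) (shift^[(k : ℕ)] y)

/-- The (strong) Walters condition. -/
def Walters (f : (ℕ → M) → ℝ) : Prop :=
  ∀ ε : ℝ, 0 < ε → ∃ η : ℝ, 0 < η ∧ ∀ n : ℕ, 1 ≤ n → ∀ x y : ℕ → M,
    dN n x y ≤ η → |birk f n x - birk f n y| ≤ ε

/-- `C_f(x,y) = sup_{n ≥ 1} sup_{a ∈ Mⁿ} (Sₙf(ax) − Sₙf(ay))`, a value in `(−∞,+∞]`. -/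
def Cf (f : (ℕ → M) → ℝ) (x y : ℕ → M) : EReal :=
  ⨆ n : ℕ, ⨆ a : Fin (n + 1) → M,
    ((birk f (n + 1) (consW a x) - birk f (n + 1) (consW a y) : ℝ) : EReal)

/-- The weak Walters condition. -/
def WeakWalters (f : (ℕ → M) → ℝ) : Prop :=
  ∀ ε : ℝ, 0 < ε → ∃ δ : ℝ, 0 < δ ∧ ∀ x y : ℕ → M,
    dOmega x y ≤ δ → Cf f x y ≤ (ε : EReal)

variable [MeasurableSpace M]

/-- The Ruelle operator `L_f φ(x) = ∫_M e^{f(ax)} φ(ax) dμ(a)`. -/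
def ruelle (μ : Measure M) (f : (ℕ → M) → ℝ) (φ : (ℕ → M) → ℝ) : (ℕ → M) → ℝ :=
  fun x => ∫ a, Real.exp (f (cons a x)) * φ (cons a x) ∂μ

/-- The Ruelle operator with weight `g`: `Lφ(x) = ∫_M g(ax) φ(ax) dμ(a)`. -/
def ruelleG (μ : Measure M) (g : (ℕ → M) → ℝ) (φ : (ℕ → M) → ℝ) : (ℕ → M) → ℝ :=
  fun x => ∫ a, g (cons a x) * φ (cons a x) ∂μ

theorem ruelle_eq_ruelle_zero_mul_exp {X : Type*} [MeasurableSpace X] (μ : Measure X)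
    (f φ : (ℕ → X) → ℝ) :
    ruelle μ f φ = ruelle μ 0 (fun y => Real.exp (f y) * φ y) := by
  funext x
  simp only [ruelle, Pi.zero_apply, Real.exp_zero, one_mul]

section BanachAlgebra

open NormedSpace

variable {K : Type*} [NormedRing K] [NormedAlgebra ℝ K] [CompleteSpace K]

theorem _root_.RingHom.map_exp_eq_real_exp (φ : K →+* ℝ) (hφ : Continuous φ) (f : K) :
    φ (exp f) = Real.exp (φ f) := by
  rw [Real.exp_eq_exp_ℝ]
  exact map_exp_of_mem_ball (𝕂 := ℝ) φ hφ f
    ((expSeries_radius_eq_top ℝ K).symm ▸ edist_lt_top _ _)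

theorem _root_.AlgHom.apply_exp_eq_real_exp {X : Type*} [TopologicalSpace X] (ι : K →ₐ[ℝ] C(X, ℝ))
    (hι : Continuous fun k : K => ι k) (f : K) (x : X) :
    ι (exp f) x = Real.exp (ι f x) :=
  ((ContinuousMap.evalAlgHom ℝ ℝ x).comp ι).toRingHom.map_exp_eq_real_exp
    ((continuous_eval_const x).comp hι) f

theorem _root_.analyticAt_comp_mul_exp {F : Type*} [NormedAddCommGroup F] [NormedSpace ℝ F]
    (A : K →L[ℝ] F) (f : K) :
    AnalyticAt ℝ (fun g : K => A.comp (ContinuousLinearMap.mul ℝ K (exp g))) f :=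
  ((ContinuousLinearMap.compL ℝ K K F A).comp (ContinuousLinearMap.mul ℝ K)).analyticAt _
    |>.comp (exp_analytic f)

theorem eq_comp_mul_exp_of_realizes_ruelle {X : Type*} [TopologicalSpace X] [MeasurableSpace X]
    (μ : Measure X) (ι : K →ₐ[ℝ] C(ℕ → X, ℝ)) (hι : Continuous fun k : K => ι k)
    (hinj : Function.Injective fun k : K => ι k) (T : K → K →L[ℝ] K)
    (hT : ∀ f φ : K, ⇑(ι (T f φ)) = ruelle μ (ι f) (ι φ)) (f : K) :
    T f = (T 0).comp (ContinuousLinearMap.mul ℝ K (exp f)) := by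
  ext φ
  apply hinj
  refine DFunLike.coe_injective ?_
  have hexp : ⇑(ι (exp f * φ)) = fun y => Real.exp (ι f y) * ι φ y := by
    funext y
    rw [map_mul, ContinuousMap.mul_apply, ι.apply_exp_eq_real_exp hι]
  calc ⇑(ι (T f φ)) = ruelle μ (ι f) (ι φ) := hT f φ
    _ = ruelle μ (ι 0) (ι (exp f * φ)) := by
      rw [ruelle_eq_ruelle_zero_mul_exp, hexp, map_zero, ContinuousMap.coe_zero]
    _ = ⇑(ι (T 0 (exp f * φ))) := (hT 0 _).symm

end BanachAlgebra

theorem statement0_general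
    (μ : Measure M)
    {K : Type*} [NormedRing K] [NormedAlgebra ℝ K] [CompleteSpace K]
    (ι : K →ₐ[ℝ] C(ℕ → M, ℝ))
    (hι : Continuous fun k : K => ι k)
    (hinj : Function.Injective fun k : K => ι k)
    (T : K → K →L[ℝ] K)
    (hT : ∀ (f φ : K) (x : ℕ → M),
      ι (T f φ) x = ∫ a, Real.exp (ι f (cons a x)) * (ι φ) (cons a x) ∂μ) :
    ∀ f : K, AnalyticAt ℝ T f := by
  have hT_eq : T = fun g => (T 0).comp (ContinuousLinearMap.mul ℝ K (NormedSpace.exp g)) :=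
    funext (eq_comp_mul_exp_of_realizes_ruelle μ ι hι hinj T fun f φ => funext (hT f φ))
  intro f
  rw [hT_eq]
  exact analyticAt_comp_mul_exp (T 0) f

/-- If `K` is a real Banach algebra, `ι : K → C(Ω)` a continuous injective
algebra homomorphism, and `T : K → L(K,K)` realizes on `K` the Ruelle operator of the
potential `ι f` (i.e. `ι (T f φ) = L_{ι f} (ι φ)` for all `φ ∈ K`), then `T` is
Fréchet-analytic. -/
theorem statement0
    [CompactSpace M] [BorelSpace M]
    (μ : Measure M) [IsProbabilityMeasure μ]
    {K : Type*} [NormedRing K] [NormedAlgebra ℝ K] [CompleteSpace K]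
    (ι : K →ₐ[ℝ] C(ℕ → M, ℝ))
    (hι : Continuous fun k : K => ι k)
    (hinj : Function.Injective fun k : K => ι k)
    (T : K → K →L[ℝ] K)
    (hT : ∀ (f φ : K) (x : ℕ → M),
      ι (T f φ) x = ∫ a, Real.exp (ι f (cons a x)) * (ι φ) (cons a x) ∂μ) :
    ∀ f : K, AnalyticAt ℝ T f :=
  statement0_general μ ι hι hinj T hT

end Paper
end
end

section
/- Let K be a real Banach algebra and let ι : K → C(Ω) be a continuous injective algebra homomorphism into the sup-normed algebra of continuous real functions on Ω. Suppose T : K → L(K,K) is a map such that for every f ∈ K, T(f) is a bounded linear operator on K satisfying ι(T(f)(φ)) = L_{ι(f)}(ι(φ)) for all φ ∈ K. Then the map f ↦ T(f)^*, sending f to the Banach-space adjoint (transpose) of T(f) acting on the topological dual K^*, is an analytic (Fréchet-analytic) map from K into L(K^*,K^*). -/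
open MeasureTheory Filter

noncomputable section

namespace Paper

variable {M : Type*} [MetricSpace M]

variable [MeasurableSpace M]

theorem map_exp_apply {X K : Type*} [TopologicalSpace X] [NormedRing K] [NormedAlgebra ℝ K]
    [CompleteSpace K] (ι : K →ₐ[ℝ] C(X, ℝ)) (hι : Continuous fun k : K => ι k) (g : K) (x : X) :
    ι (NormedSpace.exp g) x = Real.exp (ι g x) := by
  have h := NormedSpace.map_exp_of_mem_ball (𝕂 := ℝ) ((ContinuousMap.evalAlgHom ℝ ℝ x).comp ι)
    ((continuous_eval_const x).comp hι) g
    ((NormedSpace.expSeries_radius_eq_top ℝ K).symm ▸ edist_lt_top _ _)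
  simpa [Real.exp_eq_exp_ℝ] using h

theorem eq_comp_mul_exp_of_intertwines_ruelle (μ : Measure M) {K : Type*} [NormedRing K]
    [NormedAlgebra ℝ K] [CompleteSpace K] (ι : K →ₐ[ℝ] C(ℕ → M, ℝ))
    (hι : Continuous fun k : K => ι k) (hinj : Function.Injective fun k : K => ι k)
    (T : K → K →L[ℝ] K) (hT : ∀ f φ : K, ι (T f φ) = ruelle μ (ι f) (ι φ)) (g : K) :
    T g = (T 0).comp (ContinuousLinearMap.mul ℝ K (NormedSpace.exp g)) := by
  ext φ
  apply hinj
  refine DFunLike.coe_injective ?_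
  rw [ContinuousLinearMap.comp_apply, ContinuousLinearMap.mul_apply', hT, hT,
    ruelle_eq_ruelle_zero_mul_exp μ (ι g), map_zero, map_mul, ContinuousMap.coe_zero]
  congr 1
  funext y
  simp only [ContinuousMap.mul_apply, map_exp_apply ι hι]

theorem analyticAt_transpose_comp_mul_exp {K : Type*} [NormedRing K] [NormedAlgebra ℝ K]
    [CompleteSpace K] (A : K →L[ℝ] K) (f : K) :
    AnalyticAt ℝ (fun g : K => (ContinuousLinearMap.compL ℝ K K ℝ).flip
      (A.comp (ContinuousLinearMap.mul ℝ K (NormedSpace.exp g)))) f := by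
  let L : K →L[ℝ] (K →L[ℝ] ℝ) →L[ℝ] (K →L[ℝ] ℝ) :=
    (ContinuousLinearMap.compL ℝ K K ℝ).flip.comp
      ((ContinuousLinearMap.compL ℝ K K K A).comp (ContinuousLinearMap.mul ℝ K))
  have hL : AnalyticAt ℝ L (NormedSpace.exp f) :=
    ContinuousLinearMap.analyticAt (𝕜 := ℝ) (E := K) (F := (K →L[ℝ] ℝ) →L[ℝ] (K →L[ℝ] ℝ)) L _
  exact hL.comp (NormedSpace.exp_analytic f)

theorem statement1_general
    (μ : Measure M)
    {K : Type*} [NormedRing K] [NormedAlgebra ℝ K] [CompleteSpace K]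
    (ι : K →ₐ[ℝ] C(ℕ → M, ℝ))
    (hι : Continuous fun k : K => ι k)
    (hinj : Function.Injective fun k : K => ι k)
    (T : K → K →L[ℝ] K)
    (hT : ∀ (f φ : K) (x : ℕ → M),
      ι (T f φ) x = ∫ a, Real.exp (ι f (cons a x)) * (ι φ) (cons a x) ∂μ) :
    ∀ f : K,
      AnalyticAt ℝ
        (fun g : K => ((ContinuousLinearMap.compL ℝ K K ℝ).flip (T g) :
          (K →L[ℝ] ℝ) →L[ℝ] (K →L[ℝ] ℝ))) f := by
  intro f
  have hT_comp := eq_comp_mul_exp_of_intertwines_ruelle μ ι hι hinj T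
    (fun f φ => funext (hT f φ))
  exact (analyticAt_transpose_comp_mul_exp (T 0) f).congr
    (Eventually.of_forall fun g => congrArg _ (hT_comp g).symm)

/-- Under the same hypotheses as Statement 0, the map
`f ↦ (T f)^*` into `L(K^*, K^*)`, where `(T f)^* ψ = ψ ∘ T f` is the Banach-space
adjoint (transpose) of `T f`, is Fréchet-analytic. -/
theorem statement1
    [CompactSpace M] [BorelSpace M]
    (μ : Measure M) [IsProbabilityMeasure μ]
    {K : Type*} [NormedRing K] [NormedAlgebra ℝ K] [CompleteSpace K]
    (ι : K →ₐ[ℝ] C(ℕ → M, ℝ))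
    (hι : Continuous fun k : K => ι k)
    (hinj : Function.Injective fun k : K => ι k)
    (T : K → K →L[ℝ] K)
    (hT : ∀ (f φ : K) (x : ℕ → M),
      ι (T f φ) x = ∫ a, Real.exp (ι f (cons a x)) * (ι φ) (cons a x) ∂μ) :
    ∀ f : K,
      AnalyticAt ℝ
        (fun g : K => ((ContinuousLinearMap.compL ℝ K K ℝ).flip (T g) :
          (K →L[ℝ] ℝ) →L[ℝ] (K →L[ℝ] ℝ))) f :=
  statement1_general μ ι hι hinj T hT

end Paper
end
end

section
/- For all f, h, φ ∈ C(Ω), the series Σ_{n=0}^∞ (1/n!) L_f(φ·h^n) converges in the sup norm of C(Ω) and its sum equals L_{f+h}(φ); that is, L_{f+h}(φ) − L_f(φ) = Σ_{n=1}^∞ (1/n!) L_f(φ·h^n). -/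
open MeasureTheory Filter

noncomputable section

namespace Paper

variable {M : Type*} [MetricSpace M]

variable [MeasurableSpace M]

/-! The partial sums of `Σ (1/n!) φ hⁿ` converge in the Banach algebra `C(Ω)` to `φ · exp h`.
Any map given by an integral formula `Lψ(x) = ∫ w(ax) ψ(ax) dμ(a)` with continuous weight `w` is a
bounded linear operator on `C(Ω)`, so `L_f` may be applied term by term, and
`L_f(φ · exp h) = L_{f+h} φ` pointwise since `e^{f+h} = e^f e^h`. -/

theorem _root_.ContinuousMap.exp_apply {X : Type*} [TopologicalSpace X] [CompactSpace X]
    (g : C(X, ℝ)) (x : X) : NormedSpace.exp g x = Real.exp (g x) := by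
  rw [Real.exp_eq_exp_ℝ]
  exact NormedSpace.map_exp (ContinuousMap.evalAlgHom ℝ ℝ x) (continuous_eval_const x) g

omit [MeasurableSpace M] in
theorem continuous_cons_left (x : ℕ → M) : Continuous fun a : M => cons a x :=
  continuous_pi fun
    | 0 => continuous_id
    | _ + 1 => continuous_const

section IntegralFormula

variable [CompactSpace M] [OpensMeasurableSpace M] (μ : Measure M) [IsFiniteMeasure μ]

theorem integrable_comp_cons (ψ : C(ℕ → M, ℝ)) (x : ℕ → M) :
    Integrable (fun a => ψ (cons a x)) μ :=
  (ψ.continuous.comp (continuous_cons_left x)).integrable_of_hasCompactSupport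
    (HasCompactSupport.of_compactSpace _)

theorem isBoundedLinearMap_of_integral_formula (w : C(ℕ → M, ℝ))
    {L : C(ℕ → M, ℝ) → C(ℕ → M, ℝ)}
    (hL : ∀ (ψ : C(ℕ → M, ℝ)) (x : ℕ → M), L ψ x = ∫ a, w (cons a x) * ψ (cons a x) ∂μ) :
    IsBoundedLinearMap ℝ L := by
  have hint : ∀ (ψ : C(ℕ → M, ℝ)) (x : ℕ → M),
      Integrable (fun a => w (cons a x) * ψ (cons a x)) μ :=
    fun ψ x => integrable_comp_cons μ (w * ψ) x
  refine IsLinearMap.with_bound ⟨fun ψ χ => ?_, fun c ψ => ?_⟩ (‖w‖ * μ.real Set.univ)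
    fun ψ => ?_
  · ext x
    simp only [hL, ContinuousMap.add_apply, mul_add]
    exact integral_add (hint ψ x) (hint χ x)
  · ext x
    simp only [hL, ContinuousMap.smul_apply, smul_eq_mul, mul_left_comm _ c]
    exact integral_const_mul c _
  · refine (ContinuousMap.norm_le _ (by positivity)).2 fun x => ?_
    rw [hL, mul_right_comm]
    refine norm_integral_le_of_norm_le_const (.of_forall fun a => ?_)
    rw [norm_mul]
    exact mul_le_mul (w.norm_coe_le_norm _) (ψ.norm_coe_le_norm _) (norm_nonneg _) (norm_nonneg _)

end IntegralFormula

/-- For all `f, h, φ ∈ C(Ω)`, the series `Σ_{n≥0} (1/n!) L_f(φ·hⁿ)`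
converges in the sup norm of `C(Ω)` and its sum is `L_{f+h}(φ)`; equivalently
`L_{f+h}(φ) − L_f(φ) = Σ_{n≥1} (1/n!) L_f(φ·hⁿ)`.  Here `Lf` and `Lfh` are the Ruelle
operators of `f` and `f + h`, characterized pointwise by the defining integral formula. -/
theorem statement2
    [CompactSpace M] [BorelSpace M]
    (μ : Measure M) [IsProbabilityMeasure μ]
    (f h φ : C(ℕ → M, ℝ))
    (Lf Lfh : C(ℕ → M, ℝ) → C(ℕ → M, ℝ))
    (hLf : ∀ (ψ : C(ℕ → M, ℝ)) (x : ℕ → M),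
      Lf ψ x = ∫ a, Real.exp (f (cons a x)) * ψ (cons a x) ∂μ)
    (hLfh : ∀ (ψ : C(ℕ → M, ℝ)) (x : ℕ → M),
      Lfh ψ x = ∫ a, Real.exp ((f + h) (cons a x)) * ψ (cons a x) ∂μ) :
    HasSum (fun n : ℕ => ((n.factorial : ℝ)⁻¹) • Lf (φ * h ^ n)) (Lfh φ) := by
  let L := (isBoundedLinearMap_of_integral_formula μ
    ⟨fun y => Real.exp (f y), by fun_prop⟩ hLf).toContinuousLinearMap
  have hseries :
      HasSum (fun n : ℕ => (n.factorial : ℝ)⁻¹ • (φ * h ^ n)) (φ * NormedSpace.exp h) := by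
    simpa only [mul_smul_comm] using (NormedSpace.exp_series_hasSum_exp' (𝕂 := ℝ) h).mul_left φ
  have hLf_mul_exp : Lf (φ * NormedSpace.exp h) = Lfh φ := by
    ext x
    simp only [hLf, hLfh, ContinuousMap.mul_apply, ContinuousMap.add_apply,
      ContinuousMap.exp_apply, Real.exp_add]
    congr 1 with a
    ring
  rw [← hLf_mul_exp]
  exact (hseries.map L L.continuous).congr_fun fun n => (L.map_smul _ _).symm

end Paper
end
end

section
/- Let Θ : C(Ω) → L(C(Ω),C(Ω)) be the map defined by Θ(f) = L_f, where C(Ω) carries the sup norm. Then Θ is Fréchet differentiable at every f ∈ C(Ω), and its derivative is given by DΘ(f)(h) = (φ ↦ L_f(φ·h)) for every h ∈ C(Ω); moreover Θ is analytic. -/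
/-!
Since `exp (f (a x)) = (exp f) (a x)` with `exp` the exponential of the commutative Banach algebra
`C(Ω)`, we have `Θ f = Θ 0 ∘ (multiplication by exp f)`. So `Θ` is a continuous linear map
composed with `exp`, which is analytic with derivative `h ↦ exp f * h`.
-/

open MeasureTheory Filter

noncomputable section

namespace Paper

variable {M : Type*} [MetricSpace M]

variable [MeasurableSpace M]

section CommBanachAlgebra

variable {𝕂 A : Type*} [RCLike 𝕂] [NormedCommRing A] [NormedAlgebra 𝕂 A] [CompleteSpace A]

open ContinuousLinearMap

theorem hasFDerivAt_comp_mul_exp (T : A →L[𝕂] A) (f : A) :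
    HasFDerivAt (fun g : A => T.comp (mul 𝕂 A (NormedSpace.exp g)))
      ((compL 𝕂 A A A (T.comp (mul 𝕂 A (NormedSpace.exp f)))).comp (mul 𝕂 A).flip) f := by
  have h : HasFDerivAt (fun g : A => T.comp (mul 𝕂 A (NormedSpace.exp g)))
      (((compL 𝕂 A A A T).comp (mul 𝕂 A)).comp (NormedSpace.exp f • 1)) f :=
    ((compL 𝕂 A A A T).comp (mul 𝕂 A)).hasFDerivAt.comp f (hasFDerivAt_exp (𝕂 := 𝕂))
  refine h.congr_fderiv ?_
  ext k φ
  simp only [coe_comp, Function.comp_apply, compL_apply, flip_apply, mul_apply', smul_apply,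
    one_apply_eq_self, smul_eq_mul]
  rw [mul_assoc, mul_comm k φ]

theorem analyticAt_comp_mul_exp (T : A →L[𝕂] A) (f : A) :
    AnalyticAt 𝕂 (fun g : A => T.comp (mul 𝕂 A (NormedSpace.exp g))) f :=
  ((compL 𝕂 A A A T).comp (mul 𝕂 A)).analyticAt _ |>.comp (NormedSpace.exp_analytic f)

end CommBanachAlgebra

theorem eq_comp_mul_exp_of_forall_apply_eq_integral [CompactSpace M] (μ : Measure M)
    {Θ : C(ℕ → M, ℝ) → C(ℕ → M, ℝ) →L[ℝ] C(ℕ → M, ℝ)}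
    (hΘ : ∀ (f φ : C(ℕ → M, ℝ)) (x : ℕ → M),
      Θ f φ x = ∫ a, Real.exp (f (cons a x)) * φ (cons a x) ∂μ) (g : C(ℕ → M, ℝ)) :
    Θ g = (Θ 0).comp (ContinuousLinearMap.mul ℝ _ (NormedSpace.exp g)) := by
  ext φ x
  simp only [hΘ, ContinuousLinearMap.coe_comp, Function.comp_apply,
    ContinuousLinearMap.mul_apply', ContinuousMap.mul_apply, ContinuousMap.exp_apply,
    ContinuousMap.zero_apply, Real.exp_zero, one_mul]

theorem statement3_general
    [CompactSpace M]
    (μ : Measure M)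
    (Θ : C(ℕ → M, ℝ) → C(ℕ → M, ℝ) →L[ℝ] C(ℕ → M, ℝ))
    (hΘ : ∀ (f φ : C(ℕ → M, ℝ)) (x : ℕ → M),
      Θ f φ x = ∫ a, Real.exp (f (cons a x)) * φ (cons a x) ∂μ) :
    ∀ f : C(ℕ → M, ℝ),
      HasFDerivAt Θ
        (((ContinuousLinearMap.compL ℝ C(ℕ → M, ℝ) C(ℕ → M, ℝ) C(ℕ → M, ℝ)) (Θ f)).comp
          (ContinuousLinearMap.mul ℝ C(ℕ → M, ℝ)).flip) f
      ∧ AnalyticAt ℝ Θ f := by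
  intro f
  have hΘ_eq : Θ = fun g => (Θ 0).comp (ContinuousLinearMap.mul ℝ _ (NormedSpace.exp g)) :=
    funext (eq_comp_mul_exp_of_forall_apply_eq_integral μ hΘ)
  rw [hΘ_eq]
  exact ⟨hasFDerivAt_comp_mul_exp (Θ 0) f, analyticAt_comp_mul_exp (Θ 0) f⟩

/-- Let `Θ : C(Ω) → L(C(Ω), C(Ω))` be the map `Θ(f) = L_f` (characterized
pointwise by the integral formula).  Then `Θ` is Fréchet differentiable at every `f`,
with derivative `DΘ(f)(h) = (φ ↦ L_f(φ·h))`, and moreover `Θ` is analytic. -/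
theorem statement3
    [CompactSpace M] [BorelSpace M]
    (μ : Measure M) [IsProbabilityMeasure μ]
    (Θ : C(ℕ → M, ℝ) → C(ℕ → M, ℝ) →L[ℝ] C(ℕ → M, ℝ))
    (hΘ : ∀ (f φ : C(ℕ → M, ℝ)) (x : ℕ → M),
      Θ f φ x = ∫ a, Real.exp (f (cons a x)) * φ (cons a x) ∂μ) :
    ∀ f : C(ℕ → M, ℝ),
      HasFDerivAt Θ
        (((ContinuousLinearMap.compL ℝ C(ℕ → M, ℝ) C(ℕ → M, ℝ) C(ℕ → M, ℝ)) (Θ f)).comp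
          (ContinuousLinearMap.mul ℝ C(ℕ → M, ℝ)).flip) f
      ∧ AnalyticAt ℝ Θ f :=
  statement3_general μ Θ hΘ

end Paper
end
end

section
/- Let g : Ω → ℝ be continuous with g > 0 and ∫_M g(ax) dμ(a) = 1 for all x ∈ Ω, and let L denote the Ruelle operator with weight g, i.e. Lφ(x) = ∫_M g(ax) φ(ax) dμ(a). Define D*_g(x,y) = sup_{n≥1} sup_{a∈M^n} | Π_{i=0}^{n−1} g(σ^i(ax)) / g(σ^i(ay)) − 1 |, a value in [0,+∞]. Then for every continuous φ : Ω → ℝ, every n ≥ 1 and all x,y ∈ Ω: |L^n φ(x) − L^n φ(y)| ≤ sup_{a∈M^n} |φ(ax) − φ(ay)| + ‖φ‖_0 · D*_g(x,y). -/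
/-!
Write `P_z(a) = Π_{i<n} g(σⁱ(az))`. Pointwise,
`P_x φ(ax) − P_y φ(ay) = P_y (φ(ax) − φ(ay)) + P_y (P_x/P_y − 1) φ(ax)`, so the integrand is
at most `P_y · (sup |φ(ax) − φ(ay)| + ‖φ‖₀ · D*_g(x,y))`. The normalisation `∫ g(ax) dμ(a) = 1`,
iterated with Fubini, gives `∫_{Mⁿ} P_y = 1`, and integrating yields the bound.
-/

open MeasureTheory Filter

noncomputable section

namespace Paper

variable {M : Type*} [MetricSpace M]

variable [MeasurableSpace M]

/-- `D*_g(x,y) = sup_{n≥1} sup_{a∈Mⁿ} |Π_{i<n} g(σⁱ(ax))/g(σⁱ(ay)) − 1|`,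
a value in `[0,+∞]` (inside `EReal`). -/
def Dstar (g : (ℕ → M) → ℝ) (x y : ℕ → M) : EReal :=
  ⨆ n : ℕ, ⨆ a : Fin (n + 1) → M,
    ((|(∏ i ∈ Finset.range (n + 1),
        g (shift^[i] (consW a x)) / g (shift^[i] (consW a y))) - 1| : ℝ) : EReal)

section BirkhoffProduct

variable {X : Type*}

def birkProd (g : (ℕ → X) → ℝ) (n : ℕ) (x : ℕ → X) : ℝ :=
  ∏ i ∈ Finset.range n, g (shift^[i] x)

lemma birkProd_succ_cons (g : (ℕ → X) → ℝ) (n : ℕ) (b : X) (z : ℕ → X) :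
    birkProd g (n + 1) (cons b z) = g (cons b z) * birkProd g n z := by
  rw [birkProd, Finset.prod_range_succ', mul_comm]
  rfl

lemma birkProd_pos {g : (ℕ → X) → ℝ} (hg : ∀ x, 0 < g x) (n : ℕ) (x : ℕ → X) :
    0 < birkProd g n x :=
  Finset.prod_pos fun _ _ => hg _

lemma consW_fin_cons {n : ℕ} (b : X) (c : Fin n → X) (y : ℕ → X) :
    consW (Fin.cons b c : Fin (n + 1) → X) y = cons b (consW c y) := by
  funext k
  rcases k with _ | k
  · rfl
  · by_cases hk : k < n
    · simpa [consW, cons, hk] using Fin.cons_succ (α := fun _ => X) b c ⟨k, hk⟩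
    · simp [consW, cons, hk, Nat.add_sub_add_right]

variable [TopologicalSpace X]

lemma continuous_shift : Continuous (shift : (ℕ → X) → (ℕ → X)) :=
  continuous_pi fun n => continuous_apply (n + 1)

lemma continuous_consW {n : ℕ} (x : ℕ → X) : Continuous (fun a : Fin n → X => consW a x) := by
  refine continuous_pi fun k => ?_
  by_cases hk : k < n
  · simpa only [consW, dif_pos hk] using continuous_apply _
  · simpa only [consW, dif_neg hk] using continuous_const

lemma continuous_birkProd {g : (ℕ → X) → ℝ} (hg : Continuous g) (n : ℕ) :
    Continuous (birkProd g n) :=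
  continuous_finsetProd _ fun i _ => hg.comp (continuous_shift.iterate i)

end BirkhoffProduct

lemma integral_pi_fin_succ {α : Type*} [MeasurableSpace α] (μ : Measure α) [SigmaFinite μ]
    {n : ℕ} (F : (Fin (n + 1) → α) → ℝ) (hF : Integrable F (Measure.pi fun _ => μ)) :
    ∫ a, F a ∂(Measure.pi fun _ => μ) =
      ∫ c, ∫ b, F (Fin.cons b c) ∂μ ∂(Measure.pi fun _ : Fin n => μ) := by
  have e := (measurePreserving_piFinSuccAbove (fun _ : Fin (n + 1) => μ) 0).symm
  rw [← e.integral_comp (MeasurableEquiv.measurableEmbedding _)]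
  rw [integral_prod_symm]
  · simp [MeasurableEquiv.piFinSuccAbove_symm_apply, Fin.insertNthEquiv, Fin.insertNth_zero']
  · exact (e.integrable_comp_emb (MeasurableEquiv.measurableEmbedding _)).2 hF

lemma _root_.Continuous.integrable_of_compactSpace {α E : Type*} [TopologicalSpace α]
    [CompactSpace α] [MeasurableSpace α] [OpensMeasurableSpace α] [NormedAddCommGroup E]
    {μ : Measure α} [IsFiniteMeasure μ] {f : α → E} (hf : Continuous f) : Integrable f μ :=
  hf.integrable_of_hasCompactSupport (.of_compactSpace f)

lemma integral_birkProd_consW {X : Type*} [TopologicalSpace X] [CompactSpace X]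
    [SecondCountableTopology X] [MeasurableSpace X] [BorelSpace X]
    (μ : Measure X) [IsProbabilityMeasure μ] {g : (ℕ → X) → ℝ} (hg : Continuous g)
    (hgnorm : ∀ x : ℕ → X, ∫ a, g (cons a x) ∂μ = 1) (n : ℕ) (y : ℕ → X) :
    ∫ a : Fin n → X, birkProd g n (consW a y) ∂(Measure.pi fun _ => μ) = 1 := by
  induction n generalizing y with
  | zero => simp [birkProd]
  | succ n ih =>
    have hint := ((continuous_birkProd hg (n + 1)).comp
      (continuous_consW (n := n + 1) y)).integrable_of_compactSpace (μ := Measure.pi fun _ => μ)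
    rw [integral_pi_fin_succ μ (fun a => birkProd g (n + 1) (consW a y)) hint]
    simp_rw [consW_fin_cons, birkProd_succ_cons, integral_mul_const, hgnorm, one_mul]
    exact ih y

lemma abs_mul_sub_mul_le {p q u v S K D : ℝ} (hq : 0 < q) (hS : |u - v| ≤ S) (hK : |u| ≤ K)
    (hD : |p / q - 1| ≤ D) : |p * u - q * v| ≤ q * (S + K * D) := by
  have hD0 : 0 ≤ D := (abs_nonneg _).trans hD
  calc |p * u - q * v| = |q * (u - v) + q * ((p / q - 1) * u)| := by
        congr 1; field_simp; ring
    _ ≤ q * |u - v| + q * (|p / q - 1| * |u|) := by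
        grw [abs_add_le]; rw [abs_mul, abs_mul, abs_mul, abs_of_pos hq]
    _ ≤ q * S + q * (D * K) := by gcongr
    _ = q * (S + K * D) := by ring

lemma abs_integral_mul_sub_integral_mul_le {α : Type*} [MeasurableSpace α] {ν : Measure α}
    {p q u v : α → ℝ} {S K D : ℝ} (hpu : Integrable (fun a => p a * u a) ν)
    (hqv : Integrable (fun a => q a * v a) ν) (hq : Integrable q ν) (hq_pos : ∀ a, 0 < q a)
    (hq_one : ∫ a, q a ∂ν = 1) (hS : ∀ a, |u a - v a| ≤ S) (hK : ∀ a, |u a| ≤ K)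
    (hD : ∀ a, |p a / q a - 1| ≤ D) :
    |(∫ a, p a * u a ∂ν) - ∫ a, q a * v a ∂ν| ≤ S + K * D :=
  calc |(∫ a, p a * u a ∂ν) - ∫ a, q a * v a ∂ν|
      = |∫ a, (p a * u a - q a * v a) ∂ν| := by rw [integral_sub hpu hqv]
    _ ≤ ∫ a, |p a * u a - q a * v a| ∂ν := abs_integral_le_integral_abs
    _ ≤ ∫ a, q a * (S + K * D) ∂ν := integral_mono (hpu.sub hqv).abs (hq.mul_const _)
        fun a => abs_mul_sub_mul_le (hq_pos a) (hS a) (hK a) (hD a)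
    _ = S + K * D := by rw [integral_mul_const, hq_one, one_mul]

lemma abs_birkProd_div_sub_one_le_Dstar {X : Type*} [Nonempty X] (g : (ℕ → X) → ℝ)
    (x y : ℕ → X) (n : ℕ) (a : Fin n → X) :
    ((|birkProd g n (consW a x) / birkProd g n (consW a y) - 1| : ℝ) : EReal) ≤ Dstar g x y := by
  unfold Dstar
  cases n with
  | zero =>
    simpa [birkProd] using le_iSup₂_of_le 0 (fun _ => Classical.arbitrary X)
      (EReal.coe_nonneg.2 (abs_nonneg _))
  | succ m =>
    rw [birkProd, birkProd, ← Finset.prod_div_distrib]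
    exact le_iSup₂_of_le (κ := fun m => Fin (m + 1) → X) m a le_rfl

theorem statement10_general [CompactSpace M] [BorelSpace M]
    (μ : Measure M) [IsProbabilityMeasure μ]
    (g : (ℕ → M) → ℝ) (hg : Continuous g) (hgpos : ∀ x, 0 < g x)
    (hgnorm : ∀ x : ℕ → M, ∫ a, g (cons a x) ∂μ = 1)
    (φ : (ℕ → M) → ℝ) (hφ : Continuous φ)
    (n : ℕ) (x y : ℕ → M) :
    ((|(∫ a : Fin n → M,
          (∏ i ∈ Finset.range n, g (shift^[i] (consW a x))) * φ (consW a x)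
            ∂(Measure.pi fun _ : Fin n => μ)) -
        (∫ a : Fin n → M,
          (∏ i ∈ Finset.range n, g (shift^[i] (consW a y))) * φ (consW a y)
            ∂(Measure.pi fun _ : Fin n => μ))| : ℝ) : EReal)
      ≤ (⨆ a : Fin n → M, ((|φ (consW a x) - φ (consW a y)| : ℝ) : EReal))
        + ((⨆ z : ℕ → M, |φ z| : ℝ) : EReal) * Dstar g x y := by
  have : Nonempty M := nonempty_of_isProbabilityMeasure μ
  have hpx := (continuous_birkProd hg n).comp (continuous_consW (n := n) x)
  have hpy := (continuous_birkProd hg n).comp (continuous_consW (n := n) y)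
  have hφx := hφ.comp (continuous_consW (n := n) x)
  have hφy := hφ.comp (continuous_consW (n := n) y)
  obtain ⟨a₁, -, hS⟩ := isCompact_univ.exists_isMaxOn Set.univ_nonempty
    (hφx.sub hφy).abs.continuousOn
  obtain ⟨a₀, -, hD⟩ := isCompact_univ.exists_isMaxOn Set.univ_nonempty
    ((hpx.div hpy fun a => (birkProd_pos hgpos n _).ne').sub continuous_const).abs.continuousOn
  have hK : ∀ z, |φ z| ≤ ⨆ z, |φ z| := le_ciSup (isCompact_range hφ.abs).bddAbove
  have key := abs_integral_mul_sub_integral_mul_le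
    (hpx.mul hφx).integrable_of_compactSpace
    (hpy.mul hφy).integrable_of_compactSpace
    hpy.integrable_of_compactSpace
    (fun a => birkProd_pos hgpos n _) (integral_birkProd_consW μ hg hgnorm n y)
    (fun a => hS trivial) (fun a => hK _) (fun a => hD trivial)
  refine (EReal.coe_le_coe_iff.2 key).trans ?_
  rw [EReal.coe_add, EReal.coe_mul]
  have hK₀ : (0 : EReal) ≤ ((⨆ z, |φ z| : ℝ) : EReal) :=
    EReal.coe_nonneg.2 (Real.iSup_nonneg fun _ => abs_nonneg _)
  exact add_le_add (le_iSup_of_le a₁ le_rfl)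
    (mul_le_mul_of_nonneg_left (abs_birkProd_div_sub_one_le_Dstar g x y n a₀) hK₀)

/-- For `g > 0` continuous with `∫ g(ax) dμ(a) = 1` and `L` the Ruelle
operator with weight `g`, for every continuous `φ`, every `n ≥ 1` and all `x, y`:
`|Lⁿφ(x) − Lⁿφ(y)| ≤ sup_{a∈Mⁿ}|φ(ax) − φ(ay)| + ‖φ‖₀ · D*_g(x,y)`,
where `Lⁿφ(x) = ∫_{Mⁿ} Π_{i<n} g(σⁱ(ax)) · φ(ax) dμ(a₁)⋯dμ(aₙ)`. -/
theorem statement10 [CompactSpace M] [BorelSpace M]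
    (μ : Measure M) [IsProbabilityMeasure μ]
    (g : (ℕ → M) → ℝ) (hg : Continuous g) (hgpos : ∀ x, 0 < g x)
    (hgnorm : ∀ x : ℕ → M, ∫ a, g (cons a x) ∂μ = 1)
    (φ : (ℕ → M) → ℝ) (hφ : Continuous φ)
    (n : ℕ) (hn : 1 ≤ n) (x y : ℕ → M) :
    ((|(∫ a : Fin n → M,
          (∏ i ∈ Finset.range n, g (shift^[i] (consW a x))) * φ (consW a x)
            ∂(Measure.pi fun _ : Fin n => μ)) -
        (∫ a : Fin n → M,
          (∏ i ∈ Finset.range n, g (shift^[i] (consW a y))) * φ (consW a y)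
            ∂(Measure.pi fun _ : Fin n => μ))| : ℝ) : EReal)
      ≤ (⨆ a : Fin n → M, ((|φ (consW a x) - φ (consW a y)| : ℝ) : EReal))
        + ((⨆ z : ℕ → M, |φ z| : ℝ) : EReal) * Dstar g x y :=
  statement10_general μ g hg hgpos hgnorm φ hφ n x y

end Paper
end
end

section
/- Let f : Ω → ℝ be continuous. Then there exist a real number λ > 0 and a Borel probability measure ν on Ω such that ∫_Ω L_f φ dν = λ ∫_Ω φ dν for every continuous φ : Ω → ℝ; that is, ν is an eigenmeasure of the dual of the Ruelle operator: L_f^* ν = λ ν. -/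
open MeasureTheory Filter

noncomputable section

/-!
The eigenvalue is the Collatz–Wielandt number `λ = inf {r | L ψ ≤ r ψ for some ψ > 0}`
of the positive operator `L = L_f` on `C(Ω, ℝ)`; it is positive because `L 1 > 0`.
No continuous `φ` satisfies `L φ > λ φ` everywhere: if `φ` is positive somewhere, compare it
with a competitor `ψ` at a maximum of `φ / ψ`; if `φ ≤ 0`, then `-φ` itself is a competitor
for some `r < λ`. Hence the range of `L - λ` misses the open convex cone of strictly positive
functions, and Hahn–Banach gives a functional vanishing on that range and of one sign on the
cone. Normalized, it is a positive eigenfunctional of `L`, and Riesz–Markov–Kakutani turns it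
into `ν`.
-/

open Topology

section CompactSpace

variable {X : Type*} [TopologicalSpace X] [CompactSpace X]

theorem Continuous.exists_forall_le_of_compactSpace [Nonempty X] {g : X → ℝ}
    (hg : Continuous g) : ∃ x₀, ∀ x, g x₀ ≤ g x :=
  hg.exists_forall_le (by rw [cocompact_eq_bot]; exact tendsto_bot)

theorem Continuous.exists_forall_ge_of_compactSpace [Nonempty X] {g : X → ℝ}
    (hg : Continuous g) : ∃ x₀, ∀ x, g x ≤ g x₀ :=
  hg.exists_forall_ge (by rw [cocompact_eq_bot]; exact tendsto_bot)

theorem ContinuousMap.isOpen_setOf_forall_pos : IsOpen {g : C(X, ℝ) | ∀ x, 0 < g x} := by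
  simpa [Set.MapsTo] using
    ContinuousMap.isOpen_setOfPred_mapsTo (X := X) isCompact_univ (isOpen_Ioi (a := (0 : ℝ)))

theorem eventually_forall_mul_lt {φ g : X → ℝ} (hφ : Continuous φ) (hg : Continuous g)
    {t₀ : ℝ} (h : ∀ x, t₀ * φ x < g x) : ∀ᶠ t in 𝓝 t₀, ∀ x, t * φ x < g x := by
  have := isCompact_univ.eventually_forall_of_forall_eventually (x₀ := t₀)
    (P := fun t x => t * φ x < g x) fun x _ =>
      ((continuous_fst.mul (hφ.comp continuous_snd)).continuousAt.eventually_lt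
        (hg.comp continuous_snd).continuousAt (h x))
  simpa using this

end CompactSpace

theorem LinearMap.apply_eq_zero_of_forall_mem_le {E : Type*} [AddCommGroup E] [Module ℝ E]
    {p : Submodule ℝ E} {f : E →ₗ[ℝ] ℝ} {u : ℝ} (hu : ∀ b ∈ p, u ≤ f b) {b : E}
    (hb : b ∈ p) : f b = 0 := by
  by_contra hne
  have := hu (((u - 1) / f b) • b) (p.smul_mem _ hb)
  rw [map_smul, smul_eq_mul, div_mul_cancel₀ _ hne] at this
  linarith

section CollatzWielandt

variable {X : Type*} [TopologicalSpace X] [CompactSpace X]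

def collatzWielandtSet (T : C(X, ℝ) → C(X, ℝ)) : Set ℝ :=
  {r | ∃ ψ : C(X, ℝ), (∀ x, 0 < ψ x) ∧ ∀ x, T ψ x ≤ r * ψ x}

noncomputable def collatzWielandt (T : C(X, ℝ) → C(X, ℝ)) : ℝ :=
  sInf (collatzWielandtSet T)

theorem collatzWielandtSet_nonempty (T : C(X, ℝ) → C(X, ℝ)) :
    (collatzWielandtSet T).Nonempty :=
  ⟨‖T 1‖, 1, fun _ => one_pos, fun x => by
    simpa using (le_abs_self _).trans ((T 1).norm_coe_le_norm x)⟩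

variable [Nonempty X] (T : C(X, ℝ) →ₚ[ℝ] C(X, ℝ))

theorem lt_of_mem_collatzWielandtSet {r t : ℝ} (hr : r ∈ collatzWielandtSet T)
    {φ : C(X, ℝ)} (hφ : ∃ x, 0 < φ x) (h : ∀ x, t * φ x < T φ x) : t < r := by
  obtain ⟨ψ, hψ, hTψ⟩ := hr
  obtain ⟨x₁, hx₁⟩ := hφ
  obtain ⟨x₀, hx₀⟩ :=
    (φ.continuous.div ψ.continuous fun x => (hψ x).ne').exists_forall_ge_of_compactSpace
  set s := φ x₀ / ψ x₀
  have hs : 0 < s := (div_pos hx₁ (hψ x₁)).trans_le (hx₀ x₁)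
  have hφψ : φ ≤ s • ψ := ContinuousMap.le_def.2 fun x => by
    simpa [div_le_iff₀ (hψ x), mul_comm] using hx₀ x
  have hφx₀ : φ x₀ = s * ψ x₀ := (div_mul_cancel₀ _ (hψ x₀).ne').symm
  have hTφ : T φ x₀ ≤ s * T ψ x₀ := by
    simpa using ContinuousMap.le_def.1 (OrderHomClass.mono T hφψ) x₀
  have : t * (s * ψ x₀) < r * (s * ψ x₀) :=
    calc t * (s * ψ x₀) < T φ x₀ := hφx₀ ▸ h x₀
      _ ≤ s * T ψ x₀ := hTφ
      _ ≤ s * (r * ψ x₀) := mul_le_mul_of_nonneg_left (hTψ x₀) hs.le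
      _ = r * (s * ψ x₀) := by ring
  exact lt_of_mul_lt_mul_right this (mul_pos hs (hψ x₀)).le

theorem exists_pos_mem_lowerBounds_collatzWielandtSet (hT : ∀ x, 0 < T 1 x) :
    ∃ c, 0 < c ∧ c ∈ lowerBounds (collatzWielandtSet T) := by
  obtain ⟨x₀, hx₀⟩ := (T 1).continuous.exists_forall_le_of_compactSpace
  refine ⟨T 1 x₀, hT x₀, fun r hr => le_of_forall_lt fun t ht => ?_⟩
  refine lt_of_mem_collatzWielandtSet T hr (φ := 1) ⟨x₀, one_pos⟩ fun x => ?_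
  simpa using ht.trans_le (hx₀ x)

theorem collatzWielandt_pos (hT : ∀ x, 0 < T 1 x) : 0 < collatzWielandt T := by
  obtain ⟨c, hc, hcS⟩ := exists_pos_mem_lowerBounds_collatzWielandtSet T hT
  exact hc.trans_le (le_csInf (collatzWielandtSet_nonempty T) hcS)

theorem exists_apply_le_collatzWielandt_mul (hT : ∀ x, 0 < T 1 x) (φ : C(X, ℝ)) :
    ∃ x, T φ x ≤ collatzWielandt T * φ x := by
  by_contra! h
  have hev := eventually_forall_mul_lt φ.continuous (T φ).continuous h
  by_cases hφ : ∃ x, 0 < φ x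
  · obtain ⟨t, ht, hφt⟩ := ((hev.filter_mono nhdsWithin_le_nhds).and self_mem_nhdsWithin :
      ∀ᶠ t in 𝓝[>] collatzWielandt T, _ ∧ collatzWielandt T < t).exists
    obtain ⟨r, hr, hrt⟩ := exists_lt_of_csInf_lt (collatzWielandtSet_nonempty T) hφt
    exact lt_asymm hrt (lt_of_mem_collatzWielandtSet T hr hφ ht)
  · simp only [not_exists, not_lt] at hφ
    obtain ⟨t, ht, htl⟩ := ((hev.filter_mono nhdsWithin_le_nhds).and self_mem_nhdsWithin :
      ∀ᶠ t in 𝓝[<] collatzWielandt T, _ ∧ t < collatzWielandt T).exists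
    have hTφ : T φ ≤ 0 := by
      simpa using OrderHomClass.mono T (show φ ≤ 0 from ContinuousMap.le_def.2 hφ)
    have hmem : t ∈ collatzWielandtSet T := by
      refine ⟨-φ, fun x => ?_, fun x => ?_⟩
      · exact neg_pos.2 (neg_of_mul_neg_right ((h x).trans_le (ContinuousMap.le_def.1 hTφ x))
          (collatzWielandt_pos T hT).le)
      · simp only [map_neg, ContinuousMap.neg_apply]
        linarith [ht x]
    obtain ⟨c, -, hcS⟩ := exists_pos_mem_lowerBounds_collatzWielandtSet T hT
    exact (csInf_le ⟨c, hcS⟩ hmem).not_gt htl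

end CollatzWielandt

theorem exists_positiveLinearMap_eigen_of_forall_exists_le {X : Type*} [TopologicalSpace X]
    [CompactSpace X] (T : C(X, ℝ) →ₗ[ℝ] C(X, ℝ)) {lam : ℝ}
    (h : ∀ φ, ∃ x, T φ x ≤ lam * φ x) :
    ∃ Λ : C(X, ℝ) →ₚ[ℝ] ℝ, Λ 1 = 1 ∧ ∀ φ, Λ (T φ) = lam * Λ φ := by
  set P : Set C(X, ℝ) := {g | ∀ x, 0 < g x}
  have hPconv : Convex ℝ P := fun g hg g' hg' a b ha hb hab x => by
    rcases ha.eq_or_lt with rfl | ha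
    · simpa [show b = 1 by linarith] using hg' x
    · exact add_pos_of_pos_of_nonneg (mul_pos ha (hg x)) (mul_nonneg hb (hg' x).le)
  have hdisj : Disjoint P (LinearMap.range (T - lam • LinearMap.id)) := by
    refine Set.disjoint_left.2 fun g hg ⟨φ, hφ⟩ => ?_
    obtain ⟨x, hx⟩ := h φ
    have := hg x
    simp only [← hφ, LinearMap.sub_apply, LinearMap.smul_apply, LinearMap.id_coe, id_eq,
      ContinuousMap.sub_apply, ContinuousMap.coe_smul, Pi.smul_apply, smul_eq_mul, sub_pos] at this
    linarith
  obtain ⟨f, u, hfP, hfu⟩ :=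
    geometric_hahn_banach_open hPconv ContinuousMap.isOpen_setOf_forall_pos
      (Submodule.convex _) hdisj
  have hf_eigen : ∀ φ, f (T φ) = lam * f φ := fun φ => by
    have := LinearMap.apply_eq_zero_of_forall_mem_le (f := f.toLinearMap) hfu
      (LinearMap.mem_range_self _ φ)
    simp only [LinearMap.sub_apply, LinearMap.smul_apply, LinearMap.id_coe, id_eq,
      ContinuousLinearMap.coe_coe, map_sub, map_smul, smul_eq_mul] at this
    linarith
  have hu : u ≤ 0 := by simpa using hfu 0 (zero_mem _)
  have hf1 : f 1 < 0 := by linarith [hfP 1 fun _ => one_pos]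
  have hf_nonpos : ∀ g, 0 ≤ g → f g ≤ 0 := fun g hg => by
    refine le_of_forall_pos_lt_add fun ε hε => ?_
    have hmem : g + (ε / -f 1) • 1 ∈ P := fun x => by
      have := ContinuousMap.le_def.1 hg x
      have : 0 < ε / -f 1 := div_pos hε (neg_pos.2 hf1)
      simp only [ContinuousMap.add_apply, ContinuousMap.smul_apply, ContinuousMap.one_apply,
        smul_eq_mul, mul_one, ContinuousMap.zero_apply] at *
      linarith
    have hε1 : ε / -f 1 * f 1 = -ε := by field_simp [hf1.ne]
    have := hfP _ hmem
    rw [map_add, map_smul, smul_eq_mul, hε1] at this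
    linarith
  set m : C(X, ℝ) →ₗ[ℝ] ℝ := (f 1)⁻¹ • f.toLinearMap
  have hm : ∀ g, m g = f g / f 1 := fun g => by simp [m, div_eq_inv_mul]
  refine ⟨PositiveLinearMap.mk₀ m fun g hg => ?_, (?_ : m 1 = 1),
    fun φ => (?_ : m (T φ) = lam * m φ)⟩
  · rw [hm]; exact div_nonneg_of_nonpos (hf_nonpos g hg) hf1.le
  · rw [hm, div_self hf1.ne]
  · rw [hm, hm, hf_eigen, mul_div_assoc]

open CompactlySupported in
theorem exists_isProbabilityMeasure_integral_eq {X : Type*} [TopologicalSpace X]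
    [CompactSpace X] [T2Space X] [MeasurableSpace X] [BorelSpace X] (Λ : C(X, ℝ) →ₚ[ℝ] ℝ)
    (hΛ : Λ 1 = 1) :
    ∃ ν : Measure X, IsProbabilityMeasure ν ∧ ∀ g : C(X, ℝ), ∫ x, g x ∂ν = Λ g := by
  let Λc : C_c(X, ℝ) →ₚ[ℝ] ℝ := Λ.comp (PositiveLinearMap.mk₀
    { toFun := fun g => (g : C(X, ℝ)), map_add' := fun _ _ => rfl, map_smul' := fun _ _ => rfl }
    fun _ hg => hg)
  have hint (g : C(X, ℝ)) : ∫ x, g x ∂(RealRMK.rieszMeasure Λc) = Λ g :=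
    RealRMK.integral_rieszMeasure Λc (CompactlySupportedContinuousMap.continuousMapEquiv g)
  refine ⟨RealRMK.rieszMeasure Λc, ⟨?_⟩, hint⟩
  have := hint 1
  simp only [ContinuousMap.one_apply, integral_const, smul_eq_mul, mul_one, hΛ] at this
  rwa [measureReal_def, ENNReal.toReal_eq_one_iff] at this

namespace Paper

variable {M : Type*} [MetricSpace M]

theorem continuous_cons : Continuous fun p : M × (ℕ → M) => cons p.1 p.2 :=
  continuous_pi fun n => by
    cases n with
    | zero => exact continuous_fst
    | succ k => exact (continuous_apply k).comp continuous_snd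

theorem continuous_ruelle_integrand (f φ : C(ℕ → M, ℝ)) :
    Continuous fun p : (ℕ → M) × M => Real.exp (f (cons p.2 p.1)) * φ (cons p.2 p.1) := by
  have : Continuous fun p : (ℕ → M) × M => cons p.2 p.1 := continuous_cons.comp continuous_swap
  fun_prop

variable [MeasurableSpace M]

section RuelleOperator

variable [CompactSpace M] [BorelSpace M] (μ : Measure M) [IsProbabilityMeasure μ]

theorem integrable_ruelle_integrand (f φ : C(ℕ → M, ℝ)) (x : ℕ → M) :
    Integrable (fun a => Real.exp (f (cons a x)) * φ (cons a x)) μ :=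
  ((continuous_ruelle_integrand f φ).comp
    (Continuous.prodMk_right x)).integrable_of_hasCompactSupport (.of_compactSpace _)

theorem continuous_ruelle (f φ : C(ℕ → M, ℝ)) : Continuous (ruelle μ f φ) := by
  have := continuous_parametric_integral_of_continuous (μ := μ)
    (f := fun x a => Real.exp (f (cons a x)) * φ (cons a x)) (continuous_ruelle_integrand f φ)
    isCompact_univ
  simp only [Measure.restrict_univ] at this
  exact this

def ruelleOp (f : C(ℕ → M, ℝ)) : C(ℕ → M, ℝ) →ₚ[ℝ] C(ℕ → M, ℝ) :=
  PositiveLinearMap.mk₀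
    { toFun φ := ⟨ruelle μ f φ, continuous_ruelle μ f φ⟩
      map_add' φ ψ := by
        ext x
        simp only [ruelle, ContinuousMap.coe_mk, ContinuousMap.add_apply, mul_add]
        exact integral_add (integrable_ruelle_integrand μ f φ x)
          (integrable_ruelle_integrand μ f ψ x)
      map_smul' c φ := by
        ext x
        simp only [ruelle, ContinuousMap.coe_mk, ContinuousMap.smul_apply, smul_eq_mul,
          RingHom.id_apply, mul_left_comm _ c]
        exact integral_const_mul c _ }
    fun φ hφ => ContinuousMap.le_def.2 fun x => integral_nonneg fun a =>
      mul_nonneg (Real.exp_pos _).le (ContinuousMap.le_def.1 hφ _)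

theorem ruelleOp_apply (f φ : C(ℕ → M, ℝ)) (x : ℕ → M) :
    ruelleOp μ f φ x = ruelle μ f φ x :=
  rfl

theorem ruelleOp_one_pos (f : C(ℕ → M, ℝ)) (x : ℕ → M) : 0 < ruelleOp μ f 1 x := by
  simpa [ruelleOp_apply, ruelle] using integral_exp_pos (μ := μ) (f := fun a => f (cons a x))
    (by simpa using integrable_ruelle_integrand μ f 1 x)

end RuelleOperator

/-- For every continuous potential `f` there exist `λ > 0` and a Borel
probability measure `ν` on `Ω` such that `∫ L_f φ dν = λ ∫ φ dν` for every continuous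
`φ`, i.e. `L_f^* ν = λ ν`. -/
theorem statement12 [CompactSpace M] [BorelSpace M]
    (μ : Measure M) [IsProbabilityMeasure μ]
    (f : (ℕ → M) → ℝ) (hf : Continuous f) :
    ∃ lam : ℝ, 0 < lam ∧ ∃ ν : Measure (ℕ → M), IsProbabilityMeasure ν ∧
      ∀ φ : (ℕ → M) → ℝ, Continuous φ →
        ∫ z, ruelle μ f φ z ∂ν = lam * ∫ z, φ z ∂ν := by
  have := nonempty_of_isProbabilityMeasure μ
  let L := ruelleOp μ ⟨f, hf⟩
  obtain ⟨Λ, hΛ1, hΛL⟩ := exists_positiveLinearMap_eigen_of_forall_exists_le L.toLinearMap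
    (exists_apply_le_collatzWielandt_mul L (ruelleOp_one_pos μ _))
  obtain ⟨ν, hν, hνΛ⟩ := exists_isProbabilityMeasure_integral_eq Λ hΛ1
  refine ⟨collatzWielandt L, collatzWielandt_pos L (ruelleOp_one_pos μ _), ν, hν,
    fun φ hφ => ?_⟩
  calc ∫ z, ruelle μ f φ z ∂ν = Λ (L ⟨φ, hφ⟩) := hνΛ (L ⟨φ, hφ⟩)
    _ = collatzWielandt L * Λ ⟨φ, hφ⟩ := hΛL _
    _ = collatzWielandt L * ∫ z, φ z ∂ν := by rw [← hνΛ]; rfl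

end Paper
end
end

section
/- Let M = {−1,1} with the metric d(a,b) = |a−b|, let Ω = M^ℕ, and fix α > 2. Define f : Ω → ℝ by f(x) = − Σ_{n≥2} x_1 x_n / n^α (the series converges absolutely since α > 1). Then f is continuous and satisfies the Walters condition. -/
open MeasureTheory Filter

noncomputable section

namespace Paper

variable {M : Type*} [MetricSpace M]

variable [MeasurableSpace M]

instance : Finite ({-1, 1} : Set ℝ) :=
  Set.Finite.to_subtype ((Set.finite_singleton (1 : ℝ)).insert (-1))

/-- The long-range Ising potential `f(x) = −Σ_{n≥2} x₁ xₙ / n^α` on `{−1,1}^ℕ`. -/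
def isingPot (α : ℝ) (x : ℕ → ({-1, 1} : Set ℝ)) : ℝ :=
  -∑' k : ℕ, ((x 0 : ℝ) * (x (k + 1) : ℝ)) / ((k + 2 : ℝ) ^ α)


section Aux18

open Topology

open Filter

local notation "Mt" => ({-1, 1} : Set ℝ)

lemma shift_iterate {M : Type*} [MetricSpace M] (x : ℕ → M) (i j : ℕ) :
    (shift)^[i] x j = x (i + j) := by
  induction i generalizing x j with
  | zero => simp
  | succ i ih =>
    rw [Function.iterate_succ_apply, ih]
    show x (i + j + 1) = x (i + 1 + j)
    congr 1; omega

lemma abs_coe (x : Mt) : |(x : ℝ)| = 1 := by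
  rcases x.2 with h | h <;> rw [h] <;> norm_num

lemma dist_le_two (a b : Mt) : dist a b ≤ 2 := by
  rw [Subtype.dist_eq, Real.dist_eq]
  calc |(a : ℝ) - b| ≤ |(a : ℝ)| + |(b : ℝ)| := abs_sub _ _
  _ = 2 := by rw [abs_coe, abs_coe]; norm_num

lemma dist_eq_two {a b : Mt} (h : a ≠ b) : dist a b = 2 := by
  have hne : (a : ℝ) ≠ (b : ℝ) := fun hc => h (Subtype.ext hc)
  rw [Subtype.dist_eq, Real.dist_eq]
  rcases a.2 with ha | ha <;> rcases b.2 with hb | hb <;>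
    first
      | (exact absurd (ha.trans hb.symm) hne)
      | (rw [ha, hb]; norm_num)

lemma summable_rpow_shift {s : ℝ} (hs : 1 < s) :
    Summable (fun k : ℕ => ((k : ℝ) + 2) ^ (-s)) := by
  have h : Summable (fun n : ℕ => (n : ℝ) ^ (-s)) :=
    Real.summable_nat_rpow.2 (by linarith)
  exact ((summable_nat_add_iff 2).2 h).congr fun k => by push_cast; ring_nf

lemma abs_term (α : ℝ) (x : ℕ → Mt) (k : ℕ) :
    |((x 0 : ℝ) * (x (k + 1) : ℝ)) / ((k + 2 : ℝ) ^ α)| = ((k : ℝ) + 2) ^ (-α) := by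
  have hk : (0 : ℝ) < (k : ℝ) + 2 := by positivity
  rw [abs_div, abs_mul, abs_coe, abs_coe, one_mul,
    abs_of_pos (Real.rpow_pos_of_pos hk α), Real.rpow_neg hk.le, one_div]

lemma summable_term {α : ℝ} (hα : 2 < α) (x : ℕ → Mt) :
    Summable (fun k : ℕ => ((x 0 : ℝ) * (x (k + 1) : ℝ)) / ((k + 2 : ℝ) ^ α)) := by
  refine Summable.of_abs ?_
  exact ((summable_rpow_shift (by linarith : (1:ℝ) < α)).congr
    fun k => (abs_term α x k).symm)

lemma key_est {α : ℝ} (hα : 2 < α) (p : ℕ) (x y : ℕ → Mt)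
    (hag : ∀ j, j ≤ p → x j = y j) :
    |isingPot α x - isingPot α y| ≤
      2 * (((p : ℝ) + 2) ^ (-(α/2))) * ∑' k : ℕ, ((k : ℝ) + 2) ^ (-(α/2)) := by
  have ha1 : (1:ℝ) < α/2 := by linarith
  have hsg : Summable (fun k : ℕ => ((k : ℝ) + 2) ^ (-(α/2))) := summable_rpow_shift ha1
  set tx : ℕ → ℝ := fun k => ((x 0 : ℝ) * (x (k + 1) : ℝ)) / ((k + 2 : ℝ) ^ α) with htx
  set ty : ℕ → ℝ := fun k => ((y 0 : ℝ) * (y (k + 1) : ℝ)) / ((k + 2 : ℝ) ^ α) with hty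
  have hx : Summable tx := summable_term hα x
  have hy : Summable ty := summable_term hα y
  set d : ℕ → ℝ := fun k => ty k - tx k with hdd
  have hd : Summable d := hy.sub hx
  have habs : Summable (fun k => |d k|) := hd.abs
  have hdiff : isingPot α x - isingPot α y = ∑' k, d k := by
    rw [isingPot, isingPot, ← htx, ← hty, Summable.tsum_sub hy hx]
    ring
  have h1 : |∑' k, d k| ≤ ∑' k, |d k| := by
    simpa [Real.norm_eq_abs] using norm_tsum_le_tsum_norm (f := d) (by simpa [Real.norm_eq_abs] using habs)
  have h2 : ∑' k, |d k| = ∑' k, |d (k + p)| := by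
    rw [← Summable.sum_add_tsum_nat_add p habs]
    have : ∀ k ∈ Finset.range p, |d k| = 0 := by
      intro k hk
      have hk' : k + 1 ≤ p := Finset.mem_range.1 hk
      simp [hdd, hty, htx, hag 0 (Nat.zero_le p), hag (k+1) hk']
    rw [Finset.sum_congr rfl this]
    simp
  have hbound : ∀ k : ℕ, |d (k + p)| ≤
      (2 * (((p : ℝ) + 2) ^ (-(α/2)))) * ((k : ℝ) + 2) ^ (-(α/2)) := by
    intro k
    have hq : (0:ℝ) < ((k + p : ℕ) : ℝ) + 2 := by positivity
    have hstep : |d (k + p)| ≤ 2 * (((k + p : ℕ) : ℝ) + 2) ^ (-α) := by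
      calc |d (k + p)| ≤ |ty (k + p)| + |tx (k + p)| := abs_sub _ _
      _ = 2 * (((k + p : ℕ) : ℝ) + 2) ^ (-α) := by
          rw [hty, htx]
          show |((y 0 : ℝ) * (y ((k+p) + 1) : ℝ)) / (((k+p : ℕ) : ℝ) + 2) ^ α| +
            |((x 0 : ℝ) * (x ((k+p) + 1) : ℝ)) / (((k+p : ℕ) : ℝ) + 2) ^ α| = _
          rw [abs_term α y (k + p), abs_term α x (k + p)]
          ring
    refine hstep.trans ?_
    have hsplit : (((k + p : ℕ) : ℝ) + 2) ^ (-α)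
        = (((k + p : ℕ) : ℝ) + 2) ^ (-(α/2)) * (((k + p : ℕ) : ℝ) + 2) ^ (-(α/2)) := by
      rw [← Real.rpow_add hq]
      ring_nf
    rw [hsplit]
    have hb1 : (((k + p : ℕ) : ℝ) + 2) ^ (-(α/2)) ≤ ((p : ℝ) + 2) ^ (-(α/2)) := by
      apply Real.rpow_le_rpow_of_nonpos (by positivity) (by push_cast; linarith [Nat.cast_nonneg (α := ℝ) k]) (by linarith)
    have hb2 : (((k + p : ℕ) : ℝ) + 2) ^ (-(α/2)) ≤ ((k : ℝ) + 2) ^ (-(α/2)) := by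
      apply Real.rpow_le_rpow_of_nonpos (by positivity) (by push_cast; linarith [Nat.cast_nonneg (α := ℝ) p]) (by linarith)
    calc 2 * ((((k + p : ℕ) : ℝ) + 2) ^ (-(α/2)) * (((k + p : ℕ) : ℝ) + 2) ^ (-(α/2)))
        ≤ 2 * (((p : ℝ) + 2) ^ (-(α/2)) * (((k : ℝ) + 2) ^ (-(α/2)))) := by
          have := mul_le_mul hb1 hb2 (Real.rpow_nonneg hq.le _)
            (Real.rpow_nonneg (by positivity) _)
          linarith
    _ = (2 * (((p : ℝ) + 2) ^ (-(α/2)))) * ((k : ℝ) + 2) ^ (-(α/2)) := by ring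
  have hRHSsum : Summable (fun k : ℕ =>
      (2 * (((p : ℝ) + 2) ^ (-(α/2)))) * ((k : ℝ) + 2) ^ (-(α/2))) := hsg.mul_left _
  have habs' : Summable (fun k => |d (k + p)|) := (summable_nat_add_iff p).2 habs
  calc |isingPot α x - isingPot α y| = |∑' k, d k| := by rw [hdiff]
  _ ≤ ∑' k, |d k| := h1
  _ = ∑' k, |d (k + p)| := h2
  _ ≤ ∑' k : ℕ, (2 * (((p : ℝ) + 2) ^ (-(α/2)))) * ((k : ℝ) + 2) ^ (-(α/2)) :=
      Summable.tsum_le_tsum hbound habs' hRHSsum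
  _ = 2 * (((p : ℝ) + 2) ^ (-(α/2))) * ∑' k : ℕ, ((k : ℝ) + 2) ^ (-(α/2)) := tsum_mul_left

lemma cont_ising {α : ℝ} (hα : 2 < α) : Continuous (isingPot α) := by
  have h : Continuous (fun x : ℕ → Mt =>
      ∑' k : ℕ, ((x 0 : ℝ) * (x (k + 1) : ℝ)) / ((k + 2 : ℝ) ^ α)) := by
    apply continuous_tsum (u := fun k : ℕ => ((k : ℝ) + 2) ^ (-α))
    · intro k
      exact ((continuous_subtype_val.comp (continuous_apply 0)).mul
        (continuous_subtype_val.comp (continuous_apply (k + 1)))).div_const _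
    · exact summable_rpow_shift (by linarith)
    · intro k x
      rw [Real.norm_eq_abs, abs_term]
  exact h.neg

lemma dOmega_summand_summable (x y : ℕ → Mt) :
    Summable (fun n : ℕ => (1 / 2 : ℝ) ^ (n + 1) * dist (x n) (y n)) := by
  apply Summable.of_nonneg_of_le
    (fun n => mul_nonneg (by positivity) dist_nonneg) (fun n => ?_)
    summable_geometric_two
  calc (1 / 2 : ℝ) ^ (n + 1) * dist (x n) (y n)
      ≤ (1 / 2 : ℝ) ^ (n + 1) * 2 := by
        have := dist_le_two (x n) (y n)
        have h0 : (0:ℝ) ≤ (1/2:ℝ)^(n+1) := by positivity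
        nlinarith
  _ = (1 / 2 : ℝ) ^ n := by rw [pow_succ]; ring

lemma dOmega_lb {x y : ℕ → Mt} {j : ℕ} (h : x j ≠ y j) :
    (1 / 2 : ℝ) ^ j ≤ dOmega x y := by
  have hs := dOmega_summand_summable x y
  have hle := Summable.le_tsum hs j (fun i _ => mul_nonneg (by positivity) dist_nonneg)
  rw [dist_eq_two h] at hle
  calc (1/2:ℝ)^j = (1/2:ℝ)^(j+1) * 2 := by rw [pow_succ]; ring
  _ ≤ dOmega x y := hle

lemma walters_ising {α : ℝ} (hα : 2 < α) : Walters (isingPot α) := by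
  classical
  intro ε hε
  have ha1 : (1:ℝ) < α / 2 := by linarith
  set g : ℕ → ℝ := fun k => ((k : ℝ) + 2) ^ (-(α/2)) with hg
  have hsg : Summable g := summable_rpow_shift ha1
  set C : ℝ := ∑' k, g k with hC
  have hC0 : (0:ℝ) ≤ C := tsum_nonneg fun k => Real.rpow_nonneg (by positivity) _
  have htail : Tendsto (fun m : ℕ => 2 * C * ∑' k : ℕ, g (k + m)) atTop (𝓝 (2 * C * 0)) :=
    (tendsto_sum_nat_add g).const_mul (2 * C)
  rw [mul_zero] at htail
  obtain ⟨m, hm⟩ := (htail.eventually_lt_const hε).exists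
  refine ⟨(1/2:ℝ)^(m+1), by positivity, ?_⟩
  intro n hn x y hd
  have hterm : ∀ k, k < n → dOmega (shift^[k] x) (shift^[k] y) ≤ (1/2:ℝ)^(m+1) := by
    intro k hk
    have h := le_ciSup (f := fun k : Fin n =>
        dOmega (shift^[(k : ℕ)] x) (shift^[(k : ℕ)] y))
      (Set.finite_range _).bddAbove ⟨k, hk⟩
    exact le_trans h hd
  have hb : ∀ k, k < n → ∀ j, j ≤ m → x (k + j) = y (k + j) := by
    intro k hk j hj
    by_contra hne
    have h1 : (1/2:ℝ)^j ≤ dOmega (shift^[k] x) (shift^[k] y) := by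
      apply dOmega_lb
      rw [shift_iterate, shift_iterate]
      exact hne
    have h2 : ((1:ℝ)/2)^(m+1) < (1/2:ℝ)^j := by
      apply pow_lt_pow_right_of_lt_one₀ (by norm_num) (by norm_num) (by omega)
    linarith [hterm k hk]
  have hagree : ∀ q, q ≤ (n - 1) + m → x q = y q := by
    intro q hq
    by_cases hq' : q ≤ m
    · have := hb 0 (by omega) q hq'
      simpa using this
    · have h := hb (q - m) (by omega) m le_rfl
      have heq : q - m + m = q := by omega
      rwa [heq] at h
  have hterm2 : ∀ i, i < n →
      |isingPot α (shift^[i] x) - isingPot α (shift^[i] y)| ≤ 2 * C * g ((n - 1 - i) + m) := by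
    intro i hi
    have hk := key_est hα ((n - 1 - i) + m) (shift^[i] x) (shift^[i] y) ?_
    · calc |isingPot α (shift^[i] x) - isingPot α (shift^[i] y)|
          ≤ 2 * ((((n-1-i)+m : ℕ):ℝ) + 2) ^ (-(α/2)) * C := hk
      _ = 2 * C * g ((n-1-i)+m) := by simp only [hg, hC]; ring
    · intro j hj
      rw [shift_iterate, shift_iterate]
      apply hagree
      omega
  have hsum : birk (isingPot α) n x - birk (isingPot α) n y =
      ∑ i ∈ Finset.range n, (isingPot α (shift^[i] x) - isingPot α (shift^[i] y)) := by
    rw [birk, birk, Finset.sum_sub_distrib]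
  calc |birk (isingPot α) n x - birk (isingPot α) n y|
      = |∑ i ∈ Finset.range n, (isingPot α (shift^[i] x) - isingPot α (shift^[i] y))| := by
        rw [hsum]
  _ ≤ ∑ i ∈ Finset.range n, |isingPot α (shift^[i] x) - isingPot α (shift^[i] y)| :=
      Finset.abs_sum_le_sum_abs _ _
  _ ≤ ∑ i ∈ Finset.range n, 2 * C * g ((n - 1 - i) + m) :=
      Finset.sum_le_sum (fun i hi => hterm2 i (Finset.mem_range.1 hi))
  _ = 2 * C * ∑ i ∈ Finset.range n, g ((n - 1 - i) + m) := by rw [Finset.mul_sum]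
  _ = 2 * C * ∑ i ∈ Finset.range n, g (i + m) := by
      rw [Finset.sum_range_reflect (fun i => g (i + m)) n]
  _ ≤ 2 * C * ∑' k : ℕ, g (k + m) := by
      refine mul_le_mul_of_nonneg_left ?_ (by linarith : (0:ℝ) ≤ 2 * C)
      exact Summable.sum_le_tsum (Finset.range n) (fun i _ => Real.rpow_nonneg (by positivity) _)
        ((summable_nat_add_iff m).2 hsg)
  _ ≤ ε := le_of_lt hm

end Aux18

/-- For `M = {−1,1}` and `α > 2`, the potential
`f(x) = −Σ_{n≥2} x₁ xₙ / n^α` is continuous and satisfies the Walters condition. -/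
theorem statement18 (α : ℝ) (hα : 2 < α) :
    Continuous (isingPot α) ∧ Walters (isingPot α) := by
  exact ⟨cont_ising hα, walters_ising hα⟩

end Paper
end
end
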